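/- Let n ≥ 2 be an integer and λ̄ a distinct partition. Then λ̄ belongs to 𝒞_n^{d,r} if and only if its doubled distinct partition λ̄λ̄ belongs to 𝒞_n^{dd}, the set of doubled distinct n-core partitions. -/

import Mathlib

open scoped Classical

/-- `p k` is the `(k+1)`-st part `λ_{k+1}` of the partition `λ` :
partitions are encoded by their (eventually zero, antitone) sequence of parts. -/
def IsPartition (p : ℕ → ℕ) : Prop :=
  Antitone p ∧ ∃ N, ∀ i, N ≤ i → p i = 0

/-- The number of (nonzero) parts of a partition. -/
noncomputable def plen (p : ℕ → ℕ) : ℕ := Nat.card {i : ℕ // p i ≠ 0}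

/-- The number of boxes `|λ|` of a partition. -/
noncomputable def psize (p : ℕ → ℕ) : ℕ := ∑ i ∈ Finset.range (plen p), p i

/-- The conjugate partition : `pconj p j = λ^tr_{j+1}`. -/
noncomputable def pconj (p : ℕ → ℕ) (j : ℕ) : ℕ := Nat.card {i : ℕ // j + 1 ≤ p i}

/-- The size of the Durfee square of a partition. -/
noncomputable def durfee (p : ℕ → ℕ) : ℕ := Nat.card {i : ℕ // i + 1 ≤ p i}

/-- The cells (boxes) of the Young diagram, `0`-indexed : `(i, j)` is the box in
row `i+1` and column `j+1`. -/
noncomputable def cells (p : ℕ → ℕ) : Finset (ℕ × ℕ) :=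
  (Finset.range (plen p) ×ˢ Finset.range (p 0)).filter fun s => s.2 < p s.1

/-- The hook length of the (0-indexed) box `(i, j)` :
`h = λ_{i+1} - (j+1) + λ^tr_{j+1} - (i+1) + 1`. -/
noncomputable def hookLen (p : ℕ → ℕ) (i j : ℕ) : ℕ :=
  (p i - j) + (pconj p j - i) - 1

/-- The multiset of hook lengths `ℋ(λ)`. -/
noncomputable def hooks (p : ℕ → ℕ) : Multiset ℕ :=
  (cells p).val.map fun s => hookLen p s.1 s.2

/-- The multiset of hook lengths of the boxes strictly above the main diagonal. -/
noncomputable def hooksAbove (p : ℕ → ℕ) : Multiset ℕ :=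
  ((cells p).filter fun s => s.1 < s.2).val.map fun s => hookLen p s.1 s.2

/-- The multiset of hook lengths of the boxes strictly below the main diagonal. -/
noncomputable def hooksBelow (p : ℕ → ℕ) : Multiset ℕ :=
  ((cells p).filter fun s => s.2 < s.1).val.map fun s => hookLen p s.1 s.2

/-- `p` is an `n`-core : no hook length is equal to `n`. -/
def IsCore (n : ℕ) (p : ℕ → ℕ) : Prop := n ∉ hooks p

/-- Self-conjugate partitions. -/
def SelfConj (p : ℕ → ℕ) : Prop := p = pconj p

/-- Distinct partitions (strictly decreasing nonzero parts). -/
def IsDistinct (p : ℕ → ℕ) : Prop := ∀ i, p (i + 1) ≠ 0 → p (i + 1) < p i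

/-- Doubled distinct partitions : `λ_i = λ^tr_i + 1` for `i` at most
the size of the Durfee square. -/
def IsDD (p : ℕ → ℕ) : Prop := ∀ i < durfee p, p i = pconj p i + 1

/-- Conjugates of doubled distinct partitions. -/
def IsDDtr (p : ℕ → ℕ) : Prop := ∃ q, IsPartition q ∧ IsDD q ∧ p = pconj q

/-- The doubled distinct partition `λ̄λ̄` of a distinct partition `λ̄` :
add `λ̄_i` boxes to the `i`-th column of the shifted Young diagram of `λ̄`. -/
noncomputable def double (b : ℕ → ℕ) : ℕ → ℕ := fun i =>
  if i < plen b then b i + (i + 1)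
  else Nat.card {j : ℕ // j < plen b ∧ i + 1 ≤ b j + j}

/-- The self-conjugate partition associated with a distinct partition `λ̄` :
add `λ̄_i - 1` boxes to the `i`-th column of the shifted Young diagram of `λ̄`. -/
noncomputable def scOf (b : ℕ → ℕ) : ℕ → ℕ := fun i =>
  if i < plen b then b i + i
  else Nat.card {j : ℕ // j < plen b ∧ i + 1 ≤ b j + j}

/-- The binary word `ψ(λ) = (c_k)_{k ∈ ℤ}` of a partition :
`c_k = 0` iff `k ∈ {λ_i - i : i ≥ 1}` and `c_k = 1` otherwise
(i.e. iff `k ∈ {j - λ^tr_j - 1 : j ≥ 1}`). -/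
noncomputable def word (p : ℕ → ℕ) (k : ℤ) : ℕ :=
  if ∃ m : ℕ, k = (p m : ℤ) - ((m : ℤ) + 1) then 0 else 1

/-- The `g`-charge of a `g`-core : `m_i = min {k ∈ ℤ : c_{kg+i} = 1}`. -/
noncomputable def ncharge (g : ℕ) (p : ℕ → ℕ) (i : ℕ) : ℤ :=
  sInf {k : ℤ | word p (k * (g : ℤ) + (i : ℤ)) = 1}

/-- The subword of residue `k` modulo `g` of the word of `p`. -/
noncomputable def subword (g k : ℕ) (p : ℕ → ℕ) (i : ℤ) : ℕ :=
  word p ((g : ℤ) * i + (k : ℤ))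

/-- The shift turning the subword of residue `k` into a balanced partition word. -/
noncomputable def qcharge (g : ℕ) (p : ℕ → ℕ) (k : ℕ) : ℤ :=
  (Nat.card {i : ℕ // subword g k p (i : ℤ) = 0} : ℤ) -
    (Nat.card {i : ℕ // subword g k p (-((i : ℤ) + 1)) = 1} : ℤ)

/-- `ν` is the `k`-th component of the `g`-quotient of `p` : its word is the
subword of residue `k` of the word of `p`, reindexed so as to be balanced. -/
def IsQuotientAt (g : ℕ) (p : ℕ → ℕ) (k : ℕ) (ν : ℕ → ℕ) : Prop :=
  ∀ i : ℤ, word ν i = subword g k p (i + qcharge g p k)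

/-- `ω` is the `g`-core of `p` : every subword of its word is sorted
(all `0`'s, then all `1`'s), with transition index the charge of `p`. -/
def IsCoreOf (g : ℕ) (p ω : ℕ → ℕ) : Prop :=
  ∀ k < g, ∀ i : ℤ, (subword g k ω i = 1 ↔ qcharge g p k ≤ i)

/-- `(ω, ν)` is the Littlewood decomposition of `p` for the modulus `g`. -/
def IsLittlewood (g : ℕ) (p ω : ℕ → ℕ) (ν : ℕ → ℕ → ℕ) : Prop :=
  IsCoreOf g p ω ∧ ∀ k < g, IsQuotientAt g p k (ν k)

/-- The number `a_r` of boxes of residue `r` modulo `g`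
(the residue of the box `(i, j)` -- `0`-indexed -- being `(j - i) mod g`). -/
noncomputable def resCount (g : ℕ) (p : ℕ → ℕ) (r : ℕ) : ℕ :=
  ((cells p).filter fun s => ((s.2 : ℤ) - (s.1 : ℤ)) % (g : ℤ) = (r : ℤ)).card

/-- The rectangular partition with `r` rows of length `c`. -/
def rect (r c : ℕ) : ℕ → ℕ := fun i => if i < r then c else 0

/-- The statistic `m = max({1} ∪ {(g + λ̄_i)/g : λ̄_i ≡ 0 (mod g)})`. -/
noncomputable def mStat (g : ℕ) (b : ℕ → ℕ) : ℕ :=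
  sSup ({1} ∪ {k : ℕ | ∃ i < plen b, g ∣ b i ∧ k = (g + b i) / g})

/-- The statistic `m' = max({0} ∪ {λ̄_i/g : λ̄_i ≡ g/2 (mod g)})`. -/
noncomputable def mStat' (g : ℕ) (b : ℕ → ℕ) : ℕ :=
  sSup ({0} ∪ {k : ℕ | ∃ i < plen b, 2 * (b i % g) = g ∧ k = b i / g})


/-! A doubled distinct partition is, below its Durfee square, the shifted diagram above the
diagonal reflected and moved one column to the right.  Hence a box `(i, j)` with `j < i` has the
same hook length as the box `(j, i)` when `i` lies in the Durfee square and as `(j, i + 1)`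
otherwise, so the hook lengths of `λ̄λ̄` are those strictly above the diagonal together with the
diagonal ones, and the diagonal hook in row `i` is `2 λ̄_i`. -/

theorem Nat.card_subtype_eq_of_forall_iff_lt {P : ℕ → Prop} {m : ℕ} (h : ∀ i, P i ↔ i < m) :
    Nat.card {i // P i} = m :=
  Nat.card_eq_of_equiv_fin ((Equiv.subtypeEquivRight h).trans Fin.equivSubtype.symm)

theorem Nat.lt_card_subtype_iff_of_antitone {P : ℕ → Prop} (hP : Antitone P) (hN : ∃ N, ¬ P N)
    (i : ℕ) : i < Nat.card {i // P i} ↔ P i := by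
  have hP_iff : ∀ i, P i ↔ i < Nat.find hN := fun i =>
    ⟨fun h => lt_of_not_ge fun hle => Nat.find_spec hN (hP hle h),
     fun h => not_not.mp (Nat.find_min hN h)⟩
  rw [Nat.card_subtype_eq_of_forall_iff_lt hP_iff, hP_iff]

namespace IsPartition

variable {p : ℕ → ℕ} (hp : IsPartition p)
include hp

theorem lt_plen_iff (i : ℕ) : i < plen p ↔ p i ≠ 0 :=
  Nat.lt_card_subtype_iff_of_antitone (fun _ _ hij h => by have := hp.1 hij; omega)
    (hp.2.imp fun N hN => not_not.mpr (hN N le_rfl)) i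

theorem lt_pconj_iff (i j : ℕ) : i < pconj p j ↔ j < p i :=
  Nat.lt_card_subtype_iff_of_antitone (fun _ _ hij h => le_trans h (hp.1 hij))
    (hp.2.imp fun N hN => by rw [hN N le_rfl]; omega) i

theorem lt_durfee_iff (i : ℕ) : i < durfee p ↔ i < p i :=
  Nat.lt_card_subtype_iff_of_antitone
    (fun _ _ hab h => by have := hp.1 hab; omega)
    (hp.2.imp fun N hN => by rw [hN N le_rfl]; omega) i

theorem mem_cells_iff (i j : ℕ) : (i, j) ∈ cells p ↔ j < p i := by
  simp only [cells, Finset.mem_filter, Finset.mem_product, Finset.mem_range, hp.lt_plen_iff]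
  have := hp.1 (Nat.zero_le i)
  exact ⟨And.right, fun h => ⟨⟨by omega, by omega⟩, h⟩⟩

theorem le_durfee_of_durfee_le {k : ℕ} (hk : durfee p ≤ k) : p k ≤ durfee p := by
  by_contra h
  have := hp.1 hk
  have := (hp.lt_durfee_iff (durfee p)).mpr (by omega)
  omega

theorem pconj_le_durfee_of_durfee_le {k : ℕ} (hk : durfee p ≤ k) : pconj p k ≤ durfee p := by
  by_contra h
  have := (hp.lt_pconj_iff (durfee p) k).mp (by omega)
  have := (hp.lt_durfee_iff (durfee p)).mpr (by omega)
  omega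

end IsPartition

theorem mem_hooks_iff {p : ℕ → ℕ} {n : ℕ} :
    n ∈ hooks p ↔ ∃ i j, (i, j) ∈ cells p ∧ hookLen p i j = n := by
  simp [hooks]

theorem mem_hooksAbove_iff {p : ℕ → ℕ} {n : ℕ} :
    n ∈ hooksAbove p ↔ ∃ i j, i < j ∧ (i, j) ∈ cells p ∧ hookLen p i j = n := by
  simp [hooksAbove, and_assoc, and_left_comm]

namespace IsDD

variable {p : ℕ → ℕ} (hdd : IsDD p) (hp : IsPartition p)
include hdd hp

theorem pconj_succ_eq {i : ℕ} (hi : durfee p ≤ i) : pconj p (i + 1) = p i := by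
  refine Nat.card_subtype_eq_of_forall_iff_lt fun k => ?_
  rw [← hp.lt_pconj_iff]
  rcases lt_or_ge k (durfee p) with hk | hk
  · have := hdd k hk
    omega
  · have := hp.le_durfee_of_durfee_le hk
    have := hp.pconj_le_durfee_of_durfee_le hk
    omega

theorem hookLen_mem_hooksAbove_of_lt {i j : ℕ} (hc : (i, j) ∈ cells p) (hji : j < i) :
    hookLen p i j ∈ hooksAbove p := by
  rw [hp.mem_cells_iff] at hc
  have hj : j < durfee p := (hp.lt_durfee_iff j).mpr (lt_of_lt_of_le hc (hp.1 hji.le))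
  have hpj := hdd j hj
  have hij := (hp.lt_pconj_iff i j).mpr hc
  rw [mem_hooksAbove_iff]
  rcases lt_or_ge i (durfee p) with hi | hi
  · have hpi := hdd i hi
    have := (hp.lt_durfee_iff i).mp hi
    refine ⟨j, i, hji, (hp.mem_cells_iff j i).mpr (by omega), ?_⟩
    unfold hookLen
    omega
  · have := hdd.pconj_succ_eq hp hi
    refine ⟨j, i + 1, by omega, (hp.mem_cells_iff j (i + 1)).mpr (by omega), ?_⟩
    unfold hookLen
    omega

theorem mem_hooks_iff {n : ℕ} :
    n ∈ hooks p ↔ n ∈ hooksAbove p ∨ ∃ i < durfee p, hookLen p i i = n := by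
  constructor
  · rw [_root_.mem_hooks_iff]
    rintro ⟨i, j, hc, rfl⟩
    rcases lt_trichotomy i j with hij | rfl | hji
    · exact Or.inl (mem_hooksAbove_iff.mpr ⟨i, j, hij, hc, rfl⟩)
    · exact Or.inr ⟨i, (hp.lt_durfee_iff i).mpr ((hp.mem_cells_iff i i).mp hc), rfl⟩
    · exact Or.inl (hdd.hookLen_mem_hooksAbove_of_lt hp hc hji)
  · rintro (h | ⟨i, hi, rfl⟩)
    · obtain ⟨i, j, -, hc, rfl⟩ := mem_hooksAbove_iff.mp h
      exact _root_.mem_hooks_iff.mpr ⟨i, j, hc, rfl⟩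
    · exact _root_.mem_hooks_iff.mpr
        ⟨i, i, (hp.mem_cells_iff i i).mpr ((hp.lt_durfee_iff i).mp hi), rfl⟩

end IsDD

/-- The number of rows of the shifted diagram of `b` that reach column `m - 1` (`0`-indexed). -/
noncomputable def rowsReaching (b : ℕ → ℕ) (m : ℕ) : ℕ :=
  Nat.card {j : ℕ // j < plen b ∧ m ≤ b j + j}

section Double

variable {b : ℕ → ℕ}

theorem double_of_lt {i : ℕ} (hi : i < plen b) : double b i = b i + i + 1 := by
  rw [double, if_pos hi, add_assoc]

theorem double_of_le {i : ℕ} (hi : plen b ≤ i) : double b i = rowsReaching b (i + 1) := by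
  rw [double, if_neg (not_lt.mpr hi), rowsReaching]

variable (hb : IsPartition b) (hd : IsDistinct b)
include hb hd

theorem IsDistinct.add_le_add_of_le {i j : ℕ} (hij : i ≤ j) (hj : j < plen b) :
    b j + j ≤ b i + i := by
  induction j, hij using Nat.le_induction with
  | base => rfl
  | succ j _ ih =>
    have := hd j ((hb.lt_plen_iff (j + 1)).mp hj)
    have := ih (by omega)
    omega

theorem IsDistinct.plen_le_add {i : ℕ} (hi : i < plen b) : plen b ≤ b i + i := by
  have := hd.add_le_add_of_le hb (i := i) (j := plen b - 1) (by omega) (by omega)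
  have := (hb.lt_plen_iff (plen b - 1)).mp (by omega)
  omega

theorem lt_rowsReaching_iff (m k : ℕ) : k < rowsReaching b m ↔ k < plen b ∧ m ≤ b k + k :=
  Nat.lt_card_subtype_iff_of_antitone
    (fun _ c hac hc => ⟨by omega, le_trans hc.2 (hd.add_le_add_of_le hb hac hc.1)⟩)
    ⟨plen b, fun h => h.1.false⟩ k

theorem rowsReaching_le_plen (m : ℕ) : rowsReaching b m ≤ plen b := by
  by_contra h
  have := (lt_rowsReaching_iff hb hd m (plen b)).mp (by omega)
  omega

theorem rowsReaching_antitone : Antitone (rowsReaching b) := by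
  intro m m' hm
  by_contra h
  have := (lt_rowsReaching_iff hb hd m' (rowsReaching b m)).mp (by omega)
  have := (lt_rowsReaching_iff hb hd m (rowsReaching b m)).mpr ⟨this.1, by omega⟩
  omega

theorem isPartition_double : IsPartition (double b) := by
  constructor
  · intro i j hij
    rcases lt_or_ge j (plen b) with hj | hj
    · rw [double_of_lt hj, double_of_lt (by omega)]
      have := hd.add_le_add_of_le hb hij hj
      omega
    · rw [double_of_le hj]
      rcases lt_or_ge i (plen b) with hi | hi
      · rw [double_of_lt hi]
        have := rowsReaching_le_plen hb hd (j + 1)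
        have := hd.plen_le_add hb hi
        omega
      · rw [double_of_le hi]
        exact rowsReaching_antitone hb hd (by omega)
  · refine ⟨max (plen b) (b 0 + 1), fun i hi => ?_⟩
    rw [double_of_le (by omega)]
    by_contra h
    have := (lt_rowsReaching_iff hb hd (i + 1) 0).mp (by omega)
    have := hd.add_le_add_of_le hb (Nat.zero_le 0) this.1
    omega

theorem pconj_double_of_lt {j : ℕ} (hj : j < plen b) : pconj (double b) j = b j + j := by
  refine Nat.card_subtype_eq_of_forall_iff_lt fun i => ?_
  have := hd.plen_le_add hb hj
  rcases lt_or_ge i (plen b) with hi | hi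
  · have := hd.plen_le_add hb hi
    rw [double_of_lt hi]
    omega
  · rw [double_of_le hi, Nat.succ_le_iff, lt_rowsReaching_iff hb hd]
    omega

theorem durfee_double : durfee (double b) = plen b := by
  refine Nat.card_subtype_eq_of_forall_iff_lt fun i => ?_
  rcases lt_or_ge i (plen b) with hi | hi
  · rw [double_of_lt hi]
    omega
  · have := rowsReaching_le_plen hb hd (i + 1)
    rw [double_of_le hi]
    omega

theorem isDD_double : IsDD (double b) := by
  intro i hi
  rw [durfee_double hb hd] at hi
  rw [double_of_lt hi, pconj_double_of_lt hb hd hi]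

theorem hookLen_double_self {i : ℕ} (hi : i < plen b) : hookLen (double b) i i = 2 * b i := by
  rw [hookLen, double_of_lt hi, pconj_double_of_lt hb hd hi]
  omega

end Double

/-- For `n ≥ 2` and a distinct partition `λ̄` : `λ̄ ∈ 𝒞_n^{d,r}` (i.e. `n` is not
a shifted hook length of `λ̄` and `n/2` is not a part of `λ̄`) if and only if the
doubled distinct partition `λ̄λ̄` belongs to `𝒞_n^{dd}`, the set of doubled
distinct `n`-core partitions. -/
theorem distinct_core_iff_doubled_core (n : ℕ) (hn : 2 ≤ n)
    (b : ℕ → ℕ) (hb : IsPartition b) (hd : IsDistinct b) :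
    (n ∉ hooksAbove (double b) ∧ ∀ i, 2 * b i ≠ n) ↔
      (IsCore n (double b) ∧ IsDD (double b)) := by
  have hdiag : (∃ i < durfee (double b), hookLen (double b) i i = n) ↔ ∃ i, 2 * b i = n := by
    rw [durfee_double hb hd]
    constructor
    · rintro ⟨i, hi, rfl⟩
      exact ⟨i, (hookLen_double_self hb hd hi).symm⟩
    · rintro ⟨i, rfl⟩
      have hi : i < plen b := (hb.lt_plen_iff i).mpr (by omega)
      exact ⟨i, hi, hookLen_double_self hb hd hi⟩
  rw [IsCore, (isDD_double hb hd).mem_hooks_iff (isPartition_double hb hd), hdiag]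
  simp only [isDD_double hb hd, and_true, not_or, not_exists]
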